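/- The number of rational points of \(\mathcal{L}_2\) over \(\mathbb{F}_5\) is not congruent to 1 modulo 5; in fact \(|\mathcal{L}_2(\mathbb{F}_5)| = 64 \equiv 4 \pmod{5}\), so the conjectural congruence \(|X(\mathbb{F}_q)| \equiv 1 \pmod{q}\) fails for this weighted hypersurface of degree 30. -/

import Mathlib

/-- The reduction of `F₂` modulo 5, as a function of the four Igusa coordinates. -/
def F2mod5 (x y z w : ZMod 5) : ZMod 5 :=
  -x^7*y^4 + 2*x^5*y^5 + 2*x^6*y^3*z - x^3*y^6 + 2*x^4*y^4*z + x^5*y^2*z^2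
    + 2*x^6*y^2*w + 2*x^2*y^5*z - 2*x^4*y*z^3 + x^4*y^3*w - 2*x^5*y*z*w - y^6*z
    - 2*x*y^4*z^2 + x^2*y^2*z^3 - x^3*z^4 - 2*x^2*y^4*w - 2*x^3*y^2*z*w
    - 2*x^4*z^2*w - x^5*w^2 - 2*y^3*z^3 - 2*x*y*z^4 + 2*y^5*w - z^5

/-- The number of points of `𝓛₂(𝔽₅)`: `𝔽₅ˣ`-orbits (weights `(2,4,6,10)`) of
nonzero solutions of `F₂ = 0` in `𝔽₅⁴`. -/
noncomputable def L2F5card : ℕ :=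
  Nat.card (Quot (fun a b :
      {v : Fin 4 → ZMod 5 // v ≠ 0 ∧ F2mod5 (v 0) (v 1) (v 2) (v 3) = 0} =>
      ∃ l : (ZMod 5)ˣ, ∀ i, b.1 i = (l : ZMod 5) ^ (![2, 4, 6, 10] i) * a.1 i))


/-!
All weights are even, so `l ∈ 𝔽₅ˣ` acts through `l² = ±1`: the units `±1` act trivially, and
`±2` act by `(x, y, z, w) ↦ (-x, y, -z, -w)`, whose fixed points on the punctured cone are the
four points `(0, y, 0, 0)`. Enumeration shows that `F₂` has 125 zeros in `𝔽₅⁴`, so the punctured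
cone has 124 points, and Burnside's lemma counts `(124 + 124 + 4 + 4) / 4 = 64` orbits.
-/

open MulAction

theorem F2mod5_weighted_homogeneous (l x y z w : ZMod 5) :
    F2mod5 (l ^ 2 * x) (l ^ 4 * y) (l ^ 6 * z) (l ^ 10 * w) = l ^ 30 * F2mod5 x y z w := by
  unfold F2mod5
  ring

abbrev L2Cone := {v : Fin 4 → ZMod 5 // v ≠ 0 ∧ F2mod5 (v 0) (v 1) (v 2) (v 3) = 0}

namespace L2Cone

instance : MulAction (ZMod 5)ˣ L2Cone where
  smul l v := ⟨fun i => (l : ZMod 5) ^ ![2, 4, 6, 10] i * v.1 i, by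
    obtain ⟨v, hv, hF⟩ := v
    refine ⟨fun h => hv (funext fun i => ?_), ?_⟩
    · exact (l.isUnit.pow _).mul_right_eq_zero.mp (congrFun h i)
    · simp only [Fin.isValue, Matrix.cons_val]
      rw [F2mod5_weighted_homogeneous, hF, mul_zero]⟩
  one_smul v := Subtype.ext <| funext fun i => by
    change ((1 : (ZMod 5)ˣ) : ZMod 5) ^ _ * _ = _
    rw [Units.val_one, one_pow, one_mul]
  mul_smul l m v := Subtype.ext <| funext fun i => by
    change ((l * m : (ZMod 5)ˣ) : ZMod 5) ^ _ * _ = _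
    rw [Units.val_mul, mul_pow, mul_assoc]
    rfl

theorem coe_smul (l : (ZMod 5)ˣ) (v : L2Cone) (i : Fin 4) :
    (l • v).1 i = (l : ZMod 5) ^ ![2, 4, 6, 10] i * v.1 i := rfl

set_option maxRecDepth 100000 in
theorem card : Nat.card L2Cone = 124 := by
  rw [Nat.card_eq_fintype_card]
  decide

theorem smul_eq_self_of_sq_eq_one {l : (ZMod 5)ˣ} (hl : (l : ZMod 5) ^ 2 = 1) (v : L2Cone) :
    l • v = v := by
  refine Subtype.ext <| funext fun i => ?_
  obtain ⟨k, hk⟩ : 2 ∣ ![2, 4, 6, 10] i := by fin_cases i <;> decide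
  rw [coe_smul, hk, pow_mul, hl, one_pow, one_mul]

theorem smul_eq_self_iff_of_sq_eq_neg_one {l : (ZMod 5)ˣ} (hl : (l : ZMod 5) ^ 2 = -1)
    (v : L2Cone) : l • v = v ↔ v.1 0 = 0 ∧ v.1 2 = 0 ∧ v.1 3 = 0 := by
  have hneg : ∀ x : ZMod 5, -x = x ↔ x = 0 := by decide
  have h4 : (l : ZMod 5) ^ 4 = 1 := by rw [pow_mul l.val 2 2, hl]; norm_num
  have h6 : (l : ZMod 5) ^ 6 = -1 := by rw [pow_mul l.val 2 3, hl]; norm_num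
  have h10 : (l : ZMod 5) ^ 10 = -1 := by rw [pow_mul l.val 2 5, hl]; norm_num
  simp [Subtype.ext_iff, funext_iff, Fin.forall_fin_succ, coe_smul, hl, h4, h6, h10, hneg]

theorem card_fixedBy_of_sq_eq_neg_one {l : (ZMod 5)ˣ} (hl : (l : ZMod 5) ^ 2 = -1) :
    Nat.card (fixedBy L2Cone l) = 4 := by
  let onYAxis : {y : ZMod 5 // y ≠ 0} → fixedBy L2Cone l := fun y =>
    ⟨⟨![0, y, 0, 0], fun h => y.2 (congrFun h 1), by simp [F2mod5]⟩,
      (smul_eq_self_iff_of_sq_eq_neg_one hl _).2 ⟨rfl, rfl, rfl⟩⟩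
  have bijective : Function.Bijective onYAxis := by
    refine ⟨fun y y' h => Subtype.ext (congrFun (congrArg (·.1.1) h) 1), ?_⟩
    rintro ⟨v, hv⟩
    obtain ⟨h0, h2, h3⟩ := (smul_eq_self_iff_of_sq_eq_neg_one hl v).1 hv
    have hv' : v.1 = ![0, v.1 1, 0, 0] := by
      funext i
      fin_cases i <;> simp [h0, h2, h3]
    exact ⟨⟨v.1 1, fun h => v.2.1 (hv'.trans (by simp [h]))⟩, Subtype.ext (Subtype.ext hv'.symm)⟩
  rw [← Nat.card_congr (Equiv.ofBijective onYAxis bijective), Nat.card_eq_fintype_card]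
  rfl

theorem card_fixedBy (l : (ZMod 5)ˣ) :
    Nat.card (fixedBy L2Cone l) = if (l : ZMod 5) ^ 2 = 1 then 124 else 4 := by
  obtain hl | hl : (l : ZMod 5) ^ 2 = 1 ∨ (l : ZMod 5) ^ 2 = -1 := by revert l; decide
  · have : fixedBy L2Cone l = Set.univ := Set.eq_univ_of_forall (smul_eq_self_of_sq_eq_one hl)
    rw [if_pos hl, this, Nat.card_univ, card]
  · rw [if_neg (by rw [hl]; decide), card_fixedBy_of_sq_eq_neg_one hl]

theorem card_orbits : Nat.card (orbitRel.Quotient (ZMod 5)ˣ L2Cone) = 64 := by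
  classical
  have burnside := sum_card_fixedBy_eq_card_orbits_mul_card_group (ZMod 5)ˣ L2Cone
  have hsum : (∑ l : (ZMod 5)ˣ, if (l : ZMod 5) ^ 2 = 1 then 124 else 4) = 256 := by decide
  have hunits : Nat.card (ZMod 5)ˣ = 4 := by rw [Nat.card_eq_fintype_card]; rfl
  simp only [← Nat.card_eq_fintype_card, card_fixedBy, hsum, hunits] at burnside
  change 256 = Nat.card (orbitRel.Quotient (ZMod 5)ˣ L2Cone) * 4 at burnside
  omega

end L2Cone

theorem L2F5card_eq_card_orbits :
    L2F5card = Nat.card (orbitRel.Quotient (ZMod 5)ˣ L2Cone) := by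
  refine Nat.card_congr (Quot.congr (Equiv.refl L2Cone) fun a b => ?_)
  rw [Setoid.comm', orbitRel_apply, mem_orbit_iff]
  exact exists_congr fun l => ⟨fun h => Subtype.ext (funext h).symm,
    fun h i => (congrFun (congrArg Subtype.val h) i).symm⟩

/-- `|𝓛₂(𝔽₅)| = 64 ≡ 4 (mod 5)`, so the conjectural congruence
`|X(𝔽_q)| ≡ 1 (mod q)` fails for this weighted hypersurface of degree 30. -/
theorem L2_F5_congruence_fails :
    L2F5card = 64 ∧ L2F5card % 5 = 4 ∧ ¬ (L2F5card ≡ 1 [MOD 5]) := by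
  have h : L2F5card = 64 := L2F5card_eq_card_orbits.trans L2Cone.card_orbits
  exact ⟨h, by rw [h], by rw [h]; decide⟩
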